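/- arXiv:1406.7192 — 4 statements merged into one kernel-verified Lean document; each statement's English description precedes it below -/
import Mathlib

section
/- In an additive category with kernels and cokernels, if f : X → Y is a semi-stable kernel and (S, s_T, s_Y) is a pushout of f along any morphism t : X → T, then s_T is again a semi-stable kernel. -/
open CategoryTheory CategoryTheory.Limits

universe v u

variable {C : Type u} [Category.{v} C] [Preadditive C]

/-- `f` is a kernel of some morphism. -/
def IsKernelMor {X Y : C} (f : X ⟶ Y) : Prop :=
  ∃ (Z : C) (g : Y ⟶ Z) (w : f ≫ g = 0), Nonempty (IsLimit (KernelFork.ofι f w))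

/-- `g` is a cokernel of some morphism. -/
def IsCokernelMor {Y Z : C} (g : Y ⟶ Z) : Prop :=
  ∃ (X : C) (f : X ⟶ Y) (w : f ≫ g = 0), Nonempty (IsColimit (CokernelCofork.ofπ g w))

/-- `f` is a semi-stable kernel: a kernel whose pushout along any morphism is again a kernel. -/
def IsSemiStableKernel {X Y : C} (f : X ⟶ Y) : Prop :=
  IsKernelMor f ∧ ∀ ⦃T S : C⦄ (t : X ⟶ T) (sY : Y ⟶ S) (sT : T ⟶ S),
    IsPushout f t sY sT → IsKernelMor sT

/-- `g` is a semi-stable cokernel: a cokernel whose pullback along any morphism is again a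
cokernel. -/
def IsSemiStableCokernel {Y Z : C} (g : Y ⟶ Z) : Prop :=
  IsCokernelMor g ∧ ∀ ⦃T P : C⦄ (t : T ⟶ Z) (pY : P ⟶ Y) (pT : P ⟶ T),
    IsPullback pY pT g t → IsCokernelMor pT

/-- `(f, g)` is a kernel-cokernel pair: `f` is a kernel of `g` and `g` is a cokernel of `f`. -/
def IsKernelCokernelPair {X Y Z : C} (f : X ⟶ Y) (g : Y ⟶ Z) : Prop :=
  ∃ (w : f ≫ g = 0),
    Nonempty (IsLimit (KernelFork.ofι f w)) ∧ Nonempty (IsColimit (CokernelCofork.ofπ g w))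

theorem stmt5_general {X Y T S : C}
    (f : X ⟶ Y) (t : X ⟶ T) (sY : Y ⟶ S) (sT : T ⟶ S)
    (hf : IsSemiStableKernel f) (hpo : IsPushout f t sY sT) :
    IsSemiStableKernel sT :=
  ⟨hf.2 t sY sT hpo, fun _ _ u vS vU h => hf.2 (t ≫ u) (sY ≫ vS) vU (hpo.paste_vert h)⟩

theorem stmt5 [HasKernels C] [HasCokernels C] {X Y T S : C}
    (f : X ⟶ Y) (t : X ⟶ T) (sY : Y ⟶ S) (sT : T ⟶ S)
    (hf : IsSemiStableKernel f) (hpo : IsPushout f t sY sT) :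
    IsSemiStableKernel sT :=
  stmt5_general f t sY sT hf hpo
end

section
/- In an additive category with kernels and cokernels, let (f, g) be a kernel-cokernel pair with f : X → Y a semi-stable kernel, g : Y → Z a semi-stable cokernel, and let k : K → Y be a kernel of g' ∘ g where (f', g') is another such pair with g' : Z → V. Let α : K → X' be the unique morphism with f' ∘ α = g ∘ k. Then the square formed by k, α, g, f' (i.e. g ∘ k = f' ∘ α) is a pullback square. -/
open CategoryTheory CategoryTheory.Limits

universe v u

variable {C : Type u} [Category.{v} C] [Preadditive C]

section KernelOfComp

variable {D : Type*} [Category D] [HasZeroMorphisms D] {K Y Z X' V : D}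
  {k : K ⟶ Y} {g : Y ⟶ Z} {g' : Z ⟶ V} {f' : X' ⟶ Z}

lemma PullbackCone.fst_comp_comp_eq_zero (hf' : f' ≫ g' = 0) (s : PullbackCone g f') :
    s.fst ≫ g ≫ g' = 0 := by
  rw [← Category.assoc, s.condition, Category.assoc, hf', comp_zero]

lemma isPullback_of_isLimit_kernelFork_comp [Mono f'] (hf' : f' ≫ g' = 0)
    (hk : k ≫ g ≫ g' = 0) (hkl : IsLimit (KernelFork.ofι k hk)) {α : K ⟶ X'}
    (hα : α ≫ f' = k ≫ g) : IsPullback k α g f' := by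
  let lift (s : PullbackCone g f') : s.pt ⟶ K :=
    hkl.lift (KernelFork.ofι s.fst (PullbackCone.fst_comp_comp_eq_zero hf' s))
  have lift_k (s : PullbackCone g f') : lift s ≫ k = s.fst :=
    hkl.fac _ WalkingParallelPair.zero
  refine IsPullback.of_isLimit' ⟨hα.symm⟩ (PullbackCone.IsLimit.mk _ lift lift_k ?_ ?_)
  · intro s
    rw [← cancel_mono f', Category.assoc, hα, ← Category.assoc, lift_k, s.condition]
  · intro s m hm _
    exact Fork.IsLimit.hom_ext hkl (by simpa [lift_k] using hm)

end KernelOfComp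

theorem stmt15_general {Y Z X' V K : C}
    (g : Y ⟶ Z) (f' : X' ⟶ Z) (g' : Z ⟶ V) (k : K ⟶ Y) (α : K ⟶ X')
    (hpair' : IsKernelCokernelPair f' g')
    (hk : k ≫ (g ≫ g') = 0) (hker : Nonempty (IsLimit (KernelFork.ofι k hk)))
    (hα : α ≫ f' = k ≫ g) :
    IsPullback k α g f' := by
  obtain ⟨hf', ⟨hf'l⟩, -⟩ := hpair'
  have : Mono f' := mono_of_isLimit_fork hf'l
  exact isPullback_of_isLimit_kernelFork_comp hf' hk hker.some hα

theorem stmt15 [HasKernels C] [HasCokernels C] {X Y Z X' V K : C}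
    (f : X ⟶ Y) (g : Y ⟶ Z) (f' : X' ⟶ Z) (g' : Z ⟶ V) (k : K ⟶ Y) (α : K ⟶ X')
    (hpair : IsKernelCokernelPair f g) (hpair' : IsKernelCokernelPair f' g')
    (hf : IsSemiStableKernel f) (hg : IsSemiStableCokernel g)
    (hf' : IsSemiStableKernel f') (hg' : IsSemiStableCokernel g')
    (hk : k ≫ (g ≫ g') = 0) (hker : Nonempty (IsLimit (KernelFork.ofι k hk)))
    (hα : α ≫ f' = k ≫ g) :
    IsPullback k α g f' :=
  stmt15_general g f' g' k α hpair' hk hker hα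
end

section
/- In an additive category with kernels and cokernels, let (f, g) be a kernel-cokernel pair with f semi-stable kernel and g : Y → Z semi-stable cokernel, and let (P, p_R, p_Y) be a pullback of g along a morphism r : R → Z. Then the pair ((-p_R, p_Y)ᵗ : P → R ⊕ Y, [r, g] : R ⊕ Y → Z) is a kernel-cokernel pair consisting of a semi-stable kernel and a semi-stable cokernel. -/
/-!
A pullback square `(pY, pR, g, r)` is the same as a kernel `(-pR, pY)ᵗ` of `[r, g]`. As a
pullback of the semi-stable cokernel `g`, `pR` is a cokernel, hence the cokernel of its kernel
`f' = (f, 0) : X ⟶ P`. This makes `(f, f', inr, (-pR, pY)ᵗ)` a pushout square, so pushouts of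
`(-pR, pY)ᵗ` are pushouts of `f`, and `[r, g]` is the cokernel of `(-pR, pY)ᵗ` as `g` is that
of `f`. Finally, a pullback of `[r, g]` along `t` is, after a shear, a pullback of `g` along
`[-r, t]` followed by the projection `R ⊞ T ⟶ T`; this composite of two cokernels is again a
cokernel because `(pR, 0)ᵗ : P ⟶ R ⊞ T` lifts to the pullback and `pR` is epi.
-/

open CategoryTheory CategoryTheory.Limits

universe v u

variable {C : Type u} [Category.{v} C] [Preadditive C]

open Category

theorem IsCokernelMor.epi {Y Z : C} {g : Y ⟶ Z} (h : IsCokernelMor g) : Epi g := by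
  obtain ⟨_, _, _, ⟨hg⟩⟩ := h
  exact epi_of_isColimit_cofork hg

noncomputable def IsCokernelMor.isColimitCokernelCofork {K Y Z : C} {c : Y ⟶ Z} {ι : K ⟶ Y}
    (hc : IsCokernelMor c) {w : ι ≫ c = 0} (hι : IsLimit (KernelFork.ofι ι w)) :
    IsColimit (CokernelCofork.ofπ c w) := by
  choose _ m hm hcm using hc
  refine CokernelCofork.isColimitOfIsColimitOfIff' hcm.some ι
    fun _ φ => ⟨fun hφ => ?_, fun hφ => ?_⟩
  · obtain ⟨φ', rfl⟩ := CokernelCofork.IsColimit.desc' hcm.some φ hφ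
    simp [reassoc_of% w]
  · obtain ⟨x, hx⟩ := KernelFork.IsLimit.lift' hι m hm
    simp [← hx, hφ]

namespace CategoryTheory

noncomputable def IsPullback.isLimitKernelForkLift {X Y Z R P : C} {f : X ⟶ Y}
    {g : Y ⟶ Z} {r : R ⟶ Z} {pY : P ⟶ Y} {pR : P ⟶ R} (h : IsPullback pY pR g r)
    {w : f ≫ g = 0} (hf : IsLimit (KernelFork.ofι f w)) :
    IsLimit (KernelFork.ofι (h.lift f 0 (by simp [w])) (h.lift_snd _ _ _)) :=
  have : Mono f := mono_of_isLimit_fork hf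
  let lift {W : C} (z : W ⟶ P) (hz : z ≫ pR = 0) : { x // x ≫ f = z ≫ pY } :=
    KernelFork.IsLimit.lift' hf (z ≫ pY) (by rw [assoc, h.w, reassoc_of% hz, zero_comp])
  KernelFork.IsLimit.ofι _ _ (fun z hz => (lift z hz).1)
    (fun z hz => h.hom_ext (by simp [(lift z hz).2]) (by simp [hz]))
    (fun z hz m hm => by rw [← cancel_mono f, (lift z hz).2, ← hm]; simp)

noncomputable def IsPushout.isColimitCokernelCoforkOfIsColimit {X Y P W Z : C}
    {f : X ⟶ Y} {f' : X ⟶ P} {i : Y ⟶ W} {ι : P ⟶ W} (h : IsPushout f f' i ι)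
    {g : Y ⟶ Z} {w : f ≫ g = 0} (hg : IsColimit (CokernelCofork.ofπ g w)) {c : W ⟶ Z}
    (hic : i ≫ c = g) (hιc : ι ≫ c = 0) : IsColimit (CokernelCofork.ofπ c hιc) :=
  have : Epi g := epi_of_isColimit_cofork hg
  let desc {A : C} (v : W ⟶ A) (hv : ι ≫ v = 0) : { u // g ≫ u = i ≫ v } :=
    CokernelCofork.IsColimit.desc' hg (i ≫ v) (by rw [reassoc_of% h.w, hv, comp_zero])
  CokernelCofork.IsColimit.ofπ _ _ (fun v hv => (desc v hv).1)
    (fun v hv => h.hom_ext (by simp [reassoc_of% hic, (desc v hv).2])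
      (by simp [reassoc_of% hιc, hv]))
    (fun v hv m hm => by rw [← cancel_epi g, (desc v hv).2, ← hm, ← hic, assoc])

section

variable [HasBinaryBiproducts C]

theorem CommSq.biprodLift_neg_comp_biprodDesc {P Y Z R : C} {pY : P ⟶ Y} {pR : P ⟶ R}
    {g : Y ⟶ Z} {r : R ⟶ Z} (h : CommSq pY pR g r) :
    biprod.lift (-pR) pY ≫ biprod.desc r g = 0 := by
  simp [h.w]

noncomputable def IsPullback.isLimitKernelForkBiprodLift {P Y Z R : C} {pY : P ⟶ Y}
    {pR : P ⟶ R} {g : Y ⟶ Z} {r : R ⟶ Z} (h : IsPullback pY pR g r) :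
    IsLimit (KernelFork.ofι _ h.toCommSq.biprodLift_neg_comp_biprodDesc) :=
  KernelFork.IsLimit.ofι _ _
    (fun z hz => h.lift (z ≫ biprod.snd) (-(z ≫ biprod.fst)) (by
      rw [Preadditive.neg_comp, eq_neg_iff_add_eq_zero, add_comm]
      simpa [biprod.desc_eq] using hz))
    (fun z hz => by ext <;> simp)
    (fun z hz m hm => h.hom_ext (by simp [← hm]) (by simp [← hm]))

theorem isPushout_inr_biprodLift {X P R Y : C} {f : X ⟶ Y} {f' : X ⟶ P} {pR : P ⟶ R}
    {pY : P ⟶ Y} (hf : f' ≫ pY = f) {w : f' ≫ pR = 0}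
    (hR : IsColimit (CokernelCofork.ofπ pR w)) :
    IsPushout f f' biprod.inr (biprod.lift (-pR) pY) := by
  have : Epi pR := epi_of_isColimit_cofork hR
  have hcomm : f ≫ biprod.inr = f' ≫ biprod.lift (-pR) pY := by
    simp [biprod.lift_eq, reassoc_of% w, reassoc_of% hf]
  let desc (s : PushoutCocone f f') : { h : R ⟶ s.pt // pR ≫ h = pY ≫ s.inl - s.inr } :=
    CokernelCofork.IsColimit.desc' hR _ (by simp [reassoc_of% hf, s.condition])
  refine .of_isColimit (PushoutCocone.IsColimit.mk hcomm (fun s => biprod.desc (desc s).1 s.inl)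
    (fun s => biprod.inr_desc _ _) (fun s => ?_) (fun s m hm₁ hm₂ => ?_))
  · rw [biprod.lift_desc, Preadditive.neg_comp, (desc s).2]
    abel
  · ext
    · rw [← cancel_epi pR, biprod.inl_desc, (desc s).2, ← hm₁, ← hm₂, biprod.lift_eq]
      simp
    · simp [hm₁]

theorem IsPullback.shear_biprodDesc {Q R Y Z T : C} {q : Q ⟶ R ⊞ Y} {qT : Q ⟶ T}
    {r : R ⟶ Z} {g : Y ⟶ Z} {t : T ⟶ Z} (h : IsPullback q qT (biprod.desc r g) t) :
    IsPullback (q ≫ biprod.snd) (biprod.lift (q ≫ biprod.fst) qT) g (biprod.desc (-r) t) := by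
  have hcomm :
      (q ≫ biprod.snd) ≫ g = biprod.lift (q ≫ biprod.fst) qT ≫ biprod.desc (-r) t := by
    simp [← h.w, biprod.desc_eq]
  refine .of_isLimit (PullbackCone.IsLimit.mk hcomm
    (fun s => h.lift (biprod.lift (s.snd ≫ biprod.fst) s.fst) (s.snd ≫ biprod.snd) ?_)
    (fun s => by simp) (fun s => by ext <;> simp) (fun s m hm₁ hm₂ => h.hom_ext ?_ ?_))
  · have := s.condition
    simp only [biprod.desc_eq, Preadditive.comp_add, Preadditive.comp_neg] at this
    simp [biprod.desc_eq, this]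
  · replace hm₂ : m ≫ biprod.lift (q ≫ biprod.fst) qT = s.snd := hm₂
    ext
    · simpa using hm₂ =≫ biprod.fst
    · simpa using hm₁
  · replace hm₂ : m ≫ biprod.lift (q ≫ biprod.fst) qT = s.snd := hm₂
    simpa using hm₂ =≫ biprod.snd

end

end CategoryTheory

section

variable [HasBinaryBiproducts C]

theorem isCokernelMor_comp {Q W T N E : C} {a : Q ⟶ W} {n : N ⟶ W} {b : W ⟶ T}
    (ha : IsCokernelMor a) {w : n ≫ b = 0} (hb : IsColimit (CokernelCofork.ofπ b w))
    (e : E ⟶ Q) (s : E ⟶ N) [Epi s] (hes : e ≫ a = s ≫ n) : IsCokernelMor (a ≫ b) := by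
  obtain ⟨M, m, hm, ⟨hma⟩⟩ := ha
  have : Epi a := epi_of_isColimit_cofork hma
  have : Epi b := epi_of_isColimit_cofork hb
  have hw : biprod.desc m e ≫ a ≫ b = 0 := by ext <;> simp [reassoc_of% hm, reassoc_of% hes, w]
  refine ⟨M ⊞ E, biprod.desc m e, hw, ⟨CokernelCofork.IsColimit.ofπ' _ _ fun v hv => ?_⟩⟩
  obtain ⟨v₁, hv₁⟩ : { v₁ // a ≫ v₁ = v } :=
    CokernelCofork.IsColimit.desc' hma v (by simpa using biprod.inl ≫= hv)
  have hnv₁ : n ≫ v₁ = 0 := by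
    rw [← cancel_epi s, ← reassoc_of% hes, hv₁, comp_zero]
    simpa using biprod.inr ≫= hv
  obtain ⟨v₂, hv₂⟩ : { v₂ // b ≫ v₂ = v₁ } :=
    CokernelCofork.IsColimit.desc' hb v₁ hnv₁
  exact ⟨v₂, by rw [assoc, hv₂, hv₁]⟩

theorem isCokernelMor_of_isPullback_biprodDesc {Y Z R P Q T : C} {g : Y ⟶ Z} {r : R ⟶ Z}
    {pY : P ⟶ Y} {pR : P ⟶ R} {t : T ⟶ Z} {q : Q ⟶ R ⊞ Y} {qT : Q ⟶ T}
    (hg : IsSemiStableCokernel g) (hpb : IsPullback pY pR g r)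
    (hq : IsPullback q qT (biprod.desc r g) t) : IsCokernelMor qT := by
  have : Epi pR := (hg.2 r pY pR hpb).epi
  have hk : biprod.lift pR (-pY) ≫ biprod.desc r g = (0 : P ⟶ T) ≫ t := by simp [hpb.w]
  rw [← biprod.lift_snd (q ≫ biprod.fst) qT]
  exact isCokernelMor_comp (hg.2 _ _ _ hq.shear_biprodDesc) (w := biprod.inl_snd)
    (biprod.isCokernelInlCokernelFork R T) (hq.lift _ _ hk) pR (by ext <;> simp)

end

theorem stmt16_general [HasBinaryBiproducts C] {X Y Z R P : C}
    (f : X ⟶ Y) (g : Y ⟶ Z) (r : R ⟶ Z) (pY : P ⟶ Y) (pR : P ⟶ R)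
    (hpair : IsKernelCokernelPair f g)
    (hf : IsSemiStableKernel f) (hg : IsSemiStableCokernel g)
    (hpb : IsPullback pY pR g r) :
    IsKernelCokernelPair (biprod.lift (-pR) pY) (biprod.desc r g) ∧
      IsSemiStableKernel (biprod.lift (-pR) pY) ∧
      IsSemiStableCokernel (biprod.desc r g) := by
  obtain ⟨w, ⟨hker⟩, ⟨hcoker⟩⟩ := hpair
  have hw := hpb.toCommSq.biprodLift_neg_comp_biprodDesc
  have hklim := hpb.isLimitKernelForkBiprodLift
  have hpo : IsPushout f (hpb.lift f 0 (by simp [w])) biprod.inr (biprod.lift (-pR) pY) :=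
    isPushout_inr_biprodLift (hpb.lift_fst _ _ _)
      ((hg.2 r pY pR hpb).isColimitCokernelCofork (hpb.isLimitKernelForkLift hker))
  have hclim := hpo.isColimitCokernelCoforkOfIsColimit hcoker (biprod.inr_desc r g) hw
  exact ⟨⟨hw, ⟨hklim⟩, ⟨hclim⟩⟩,
    ⟨⟨Z, _, hw, ⟨hklim⟩⟩, fun _ _ _ _ _ h => hf.2 _ _ _ (hpo.paste_vert h)⟩,
    ⟨⟨P, _, hw, ⟨hclim⟩⟩,
      fun _ _ _ _ _ => isCokernelMor_of_isPullback_biprodDesc hg hpb⟩⟩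

theorem stmt16 [HasKernels C] [HasCokernels C] [HasBinaryBiproducts C] {X Y Z R P : C}
    (f : X ⟶ Y) (g : Y ⟶ Z) (r : R ⟶ Z) (pY : P ⟶ Y) (pR : P ⟶ R)
    (hpair : IsKernelCokernelPair f g)
    (hf : IsSemiStableKernel f) (hg : IsSemiStableCokernel g)
    (hpb : IsPullback pY pR g r) :
    IsKernelCokernelPair (biprod.lift (-pR) pY) (biprod.desc r g) ∧
      IsSemiStableKernel (biprod.lift (-pR) pY) ∧
      IsSemiStableCokernel (biprod.desc r g) :=
  stmt16_general f g r pY pR hpair hf hg hpb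
end

section
/- In an additive category with kernels and cokernels, every exact structure ℰ' is contained in the class ℰ of kernel-cokernel pairs (f, g) with f a semi-stable kernel and g a semi-stable cokernel; i.e., ℰ is the maximal exact structure. -/
open CategoryTheory CategoryTheory.Limits

universe v u

variable {C : Type u} [Category.{v} C] [Preadditive C]

/-- `f` is an admissible monomorphism with respect to the class `E`. -/
def AdmMono (E : ∀ ⦃X Y Z : C⦄, (X ⟶ Y) → (Y ⟶ Z) → Prop) {X Y : C} (f : X ⟶ Y) : Prop :=
  ∃ (Z : C) (g : Y ⟶ Z), E f g

/-- `g` is an admissible epimorphism with respect to the class `E`. -/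
def AdmEpi (E : ∀ ⦃X Y Z : C⦄, (X ⟶ Y) → (Y ⟶ Z) → Prop) {Y Z : C} (g : Y ⟶ Z) : Prop :=
  ∃ (X : C) (f : X ⟶ Y), E f g

/-- `E` is an exact structure in Quillen's sense: a class of kernel-cokernel pairs closed
under isomorphisms and satisfying axioms [E0], [E0op], [E1], [E1op], [E2], [E2op]. -/
structure IsExactStructure (E : ∀ ⦃X Y Z : C⦄, (X ⟶ Y) → (Y ⟶ Z) → Prop) : Prop where
  pairs : ∀ ⦃X Y Z : C⦄ (f : X ⟶ Y) (g : Y ⟶ Z), E f g → IsKernelCokernelPair f g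
  iso_closed : ∀ ⦃X Y Z X' Y' Z' : C⦄ (f : X ⟶ Y) (g : Y ⟶ Z)
      (iX : X ≅ X') (iY : Y ≅ Y') (iZ : Z ≅ Z') (f' : X' ⟶ Y') (g' : Y' ⟶ Z'),
      E f g → f ≫ iY.hom = iX.hom ≫ f' → g ≫ iZ.hom = iY.hom ≫ g' → E f' g'
  e0 : ∀ X : C, AdmMono E (𝟙 X)
  e0op : ∀ X : C, AdmEpi E (𝟙 X)
  e1 : ∀ ⦃X Y Z : C⦄ (f : X ⟶ Y) (f' : Y ⟶ Z),
      AdmMono E f → AdmMono E f' → AdmMono E (f ≫ f')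
  e1op : ∀ ⦃X Y Z : C⦄ (g : X ⟶ Y) (g' : Y ⟶ Z),
      AdmEpi E g → AdmEpi E g' → AdmEpi E (g ≫ g')
  e2 : ∀ ⦃X Y T : C⦄ (f : X ⟶ Y) (t : X ⟶ T), AdmMono E f →
      ∃ (S : C) (sY : Y ⟶ S) (sT : T ⟶ S), IsPushout f t sY sT ∧ AdmMono E sT
  e2op : ∀ ⦃Y Z T : C⦄ (g : Y ⟶ Z) (t : T ⟶ Z), AdmEpi E g →
      ∃ (P : C) (pY : P ⟶ Y) (pT : P ⟶ T), IsPullback pY pT g t ∧ AdmEpi E pT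

/-- The class of all kernel-cokernel pairs `(f, g)` with `f` a semi-stable kernel and `g` a
semi-stable cokernel. -/
def MaxExact : ∀ ⦃X Y Z : C⦄, (X ⟶ Y) → (Y ⟶ Z) → Prop :=
  fun _ _ _ f g => IsKernelCokernelPair f g ∧ IsSemiStableKernel f ∧ IsSemiStableCokernel g

/-!
Let `(f, g)` belong to an exact structure. By [E2] some pushout of `f` along any `t` is again
an admissible monomorphism, hence a kernel; since any two pushouts of the same span differ by an
isomorphism of their cocone points, every pushout of `f` along `t` is a kernel. So `f` is a
semi-stable kernel, and dually [E2op] makes `g` a semi-stable cokernel.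
-/

lemma IsKernelMor.comp_iso {X Y Y' : C} {f : X ⟶ Y} (hf : IsKernelMor f) (e : Y ≅ Y') :
    IsKernelMor (f ≫ e.hom) := by
  obtain ⟨Z, g, w, ⟨hg⟩⟩ := hf
  exact ⟨Z, e.inv ≫ g, by simp [w],
    ⟨IsKernel.ofIso g hg _ e (Iso.refl Z) (Iso.refl X) (by simp) (by simp)⟩⟩

lemma IsCokernelMor.iso_comp {Y Y' Z : C} {g : Y ⟶ Z} (hg : IsCokernelMor g) (e : Y' ≅ Y) :
    IsCokernelMor (e.hom ≫ g) := by
  obtain ⟨X, f, w, ⟨hf⟩⟩ := hg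
  exact ⟨X, f ≫ e.inv, by simp [w],
    ⟨IsCokernel.ofIso f hf _ (Iso.refl X) e.symm (Iso.refl Z) (by simp) (by simp)⟩⟩

lemma IsKernelMor.of_isPushout {X Y T S S' : C} {f : X ⟶ Y} {t : X ⟶ T}
    {sY : Y ⟶ S} {sT : T ⟶ S} {sY' : Y ⟶ S'} {sT' : T ⟶ S'}
    (h : IsPushout f t sY sT) (h' : IsPushout f t sY' sT') (hk : IsKernelMor sT') :
    IsKernelMor sT := by
  simpa using hk.comp_iso (h'.isoIsPushout _ _ h)

lemma IsCokernelMor.of_isPullback {Y Z T P P' : C} {g : Y ⟶ Z} {t : T ⟶ Z}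
    {pY : P ⟶ Y} {pT : P ⟶ T} {pY' : P' ⟶ Y} {pT' : P' ⟶ T}
    (h : IsPullback pY pT g t) (h' : IsPullback pY' pT' g t) (hc : IsCokernelMor pT') :
    IsCokernelMor pT := by
  simpa using hc.iso_comp (h.isoIsPullback _ _ h')

lemma isSemiStableKernel_of_exists_isPushout {X Y : C} {f : X ⟶ Y} (hf : IsKernelMor f)
    (H : ∀ ⦃T : C⦄ (t : X ⟶ T),
      ∃ (S : C) (sY : Y ⟶ S) (sT : T ⟶ S), IsPushout f t sY sT ∧ IsKernelMor sT) :
    IsSemiStableKernel f := by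
  refine ⟨hf, fun T S t sY sT h => ?_⟩
  obtain ⟨S', sY', sT', h', hk⟩ := H t
  exact hk.of_isPushout h h'

lemma isSemiStableCokernel_of_exists_isPullback {Y Z : C} {g : Y ⟶ Z} (hg : IsCokernelMor g)
    (H : ∀ ⦃T : C⦄ (t : T ⟶ Z),
      ∃ (P : C) (pY : P ⟶ Y) (pT : P ⟶ T), IsPullback pY pT g t ∧ IsCokernelMor pT) :
    IsSemiStableCokernel g := by
  refine ⟨hg, fun T P t pY pT h => ?_⟩
  obtain ⟨P', pY', pT', h', hc⟩ := H t
  exact hc.of_isPullback h h'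

namespace IsExactStructure

variable {E : ∀ ⦃X Y Z : C⦄, (X ⟶ Y) → (Y ⟶ Z) → Prop} (hE : IsExactStructure E)
include hE

lemma isKernelMor_of_admMono {X Y : C} {f : X ⟶ Y} (hf : AdmMono E f) : IsKernelMor f := by
  obtain ⟨Z, g, hfg⟩ := hf
  obtain ⟨w, hker, -⟩ := hE.pairs f g hfg
  exact ⟨Z, g, w, hker⟩

lemma isCokernelMor_of_admEpi {Y Z : C} {g : Y ⟶ Z} (hg : AdmEpi E g) : IsCokernelMor g := by
  obtain ⟨X, f, hfg⟩ := hg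
  obtain ⟨w, -, hcoker⟩ := hE.pairs f g hfg
  exact ⟨X, f, w, hcoker⟩

lemma isSemiStableKernel_of_admMono {X Y : C} {f : X ⟶ Y} (hf : AdmMono E f) :
    IsSemiStableKernel f :=
  isSemiStableKernel_of_exists_isPushout (hE.isKernelMor_of_admMono hf) fun _ t =>
    let ⟨S, sY, sT, h, hsT⟩ := hE.e2 f t hf
    ⟨S, sY, sT, h, hE.isKernelMor_of_admMono hsT⟩

lemma isSemiStableCokernel_of_admEpi {Y Z : C} {g : Y ⟶ Z} (hg : AdmEpi E g) :
    IsSemiStableCokernel g :=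
  isSemiStableCokernel_of_exists_isPullback (hE.isCokernelMor_of_admEpi hg) fun _ t =>
    let ⟨P, pY, pT, h, hpT⟩ := hE.e2op g t hg
    ⟨P, pY, pT, h, hE.isCokernelMor_of_admEpi hpT⟩

end IsExactStructure

theorem stmt19_general
    (E' : ∀ ⦃X Y Z : C⦄, (X ⟶ Y) → (Y ⟶ Z) → Prop) (hE' : IsExactStructure E') :
    ∀ ⦃X Y Z : C⦄ (f : X ⟶ Y) (g : Y ⟶ Z), E' f g → MaxExact f g :=
  fun X _ Z f g hfg =>
    ⟨hE'.pairs f g hfg, hE'.isSemiStableKernel_of_admMono ⟨Z, g, hfg⟩,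
      hE'.isSemiStableCokernel_of_admEpi ⟨X, f, hfg⟩⟩

theorem stmt19 [HasKernels C] [HasCokernels C]
    (E' : ∀ ⦃X Y Z : C⦄, (X ⟶ Y) → (Y ⟶ Z) → Prop) (hE' : IsExactStructure E') :
    ∀ ⦃X Y Z : C⦄ (f : X ⟶ Y) (g : Y ⟶ Z), E' f g → MaxExact f g :=
  stmt19_general E' hE'
end
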